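/- In the setting of the renormalized coherent-state quantization (finite moments 𝓘(n) = ∫₀^∞ t^n/N(t) dt, μ_n = 𝓘(n)/x_n!, x̃_n! = (μ_n/μ_0) x_n!, x̃_n := x̃_n!/x̃_{n−1}!), the quantization of the classical harmonic-oscillator Hamiltonian f(z) = |z|² is the diagonal operator x̃_{N+1}: for all n, m ∈ ℕ, (1/(μ_0 π √(x̃_n! x̃_m!))) ∫_ℂ |z|² z^n (conj z)^m / N(|z|²) dA(z) = x̃_{n+1} · δ_{n,m}. In particular the spectrum of the quantized |z|² is the shifted renormalized sequence (x̃_{n+1})_{n∈ℕ}. -/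

import Mathlib

open MeasureTheory

/-- The generalized factorial `xₙ! = x 1 * x 2 * ⋯ * x n` (with `x₀! = 1`). -/
noncomputable def gfact (x : ℕ → ℝ) (n : ℕ) : ℝ := ∏ k ∈ Finset.range n, x (k + 1)

/-- The associated exponential `N(t) = Σ tⁿ/xₙ!`. -/
noncomputable def gexp (x : ℕ → ℝ) (t : ℝ) : ℝ := ∑' n : ℕ, t ^ n / gfact x n

/-- The moment integrals `𝓘(n) = ∫₀^∞ tⁿ / N(t) dt`. -/
noncomputable def momI (x : ℕ → ℝ) (n : ℕ) : ℝ := ∫ t in Set.Ioi (0 : ℝ), t ^ n / gexp x t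

/-- The ratios `μₙ = 𝓘(n)/xₙ!`. -/
noncomputable def mu (x : ℕ → ℝ) (n : ℕ) : ℝ := momI x n / gfact x n

/-- The renormalized factorials `x̃ₙ! = (μₙ/μ₀) xₙ!`. -/
noncomputable def tfact (x : ℕ → ℝ) (n : ℕ) : ℝ := (mu x n / mu x 0) * gfact x n

/-!
Rotation invariance of `dA` and of the symbol `|z|²/N(|z|²)` makes the angular integral of
`zⁿ z̄ᵐ = rⁿ⁺ᵐ e^{i(n-m)θ}` vanish unless `n = m`, which gives the Kronecker delta. On the
diagonal, polar coordinates and the substitution `t = r²` turn the integral into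
`π 𝓘(n+1)`, and since `x̃ₙ! = 𝓘(n)/𝓘(0)` and `μ₀ = 𝓘(0)`, the prefactor turns this into
`𝓘(n+1)/𝓘(n) = x̃_{n+1}!/x̃ₙ!`.
-/

open Set Real

theorem integral_Ioo_exp_int_mul_mul_I (k : ℤ) :
    ∫ θ in Ioo (-π) π, Complex.exp (k * θ * Complex.I) = if k = 0 then (2 * π : ℂ) else 0 := by
  split_ifs with hk
  · simp [hk, two_mul, pi_pos.le]
  · have hc : (k * Complex.I : ℂ) ≠ 0 := by simp [hk]
    have hperiod : Complex.exp (k * Complex.I * π) = Complex.exp (k * Complex.I * (-π : ℝ)) := by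
      rw [← mul_one (Complex.exp (_ * (-π : ℝ))), ← Complex.exp_int_mul_two_pi_mul_I k,
        ← Complex.exp_add]
      push_cast
      ring_nf
    simp_rw [mul_right_comm _ _ Complex.I]
    rw [← integral_Ioc_eq_integral_Ioo, ← intervalIntegral.integral_of_le (by linarith [pi_pos]),
      integral_exp_mul_complex hc, hperiod, sub_self, zero_div]

theorem integral_mul_pow_mul_conj_pow (g : ℝ → ℂ) (n m : ℕ) :
    ∫ z : ℂ, g ‖z‖ * z ^ n * (starRingEnd ℂ) z ^ m =
      if n = m then 2 * π * ∫ r in Ioi (0 : ℝ), (r : ℂ) ^ (2 * n + 1) * g r else 0 := by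
  have hpolar : ∫ z : ℂ, g ‖z‖ * z ^ n * (starRingEnd ℂ) z ^ m =
      (∫ r in Ioi (0 : ℝ), (r : ℂ) ^ (n + m + 1) * g r) *
        ∫ θ in Ioo (-π) π, Complex.exp (((n - m : ℤ) : ℂ) * θ * Complex.I) := by
    rw [← Complex.integral_comp_polarCoord_symm, polarCoord_target,
      Measure.volume_eq_prod, ← setIntegral_prod_mul]
    refine setIntegral_congr_fun (measurableSet_Ioi.prod measurableSet_Ioo) ?_
    rintro ⟨r, θ⟩ ⟨hr, -⟩
    have hz : Complex.polarCoord.symm (r, θ) = r * Complex.exp (θ * Complex.I) := by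
      rw [Complex.polarCoord_symm_apply, Complex.exp_mul_I]
      push_cast
      ring
    have hconj : (starRingEnd ℂ) (Complex.exp (θ * Complex.I)) = Complex.exp (-θ * Complex.I) := by
      rw [← Complex.exp_conj]
      simp
    dsimp only
    rw [Complex.norm_polarCoord_symm, abs_of_pos (mem_Ioi.mp hr), hz, map_mul, Complex.conj_ofReal,
      hconj]
    simp only [Complex.real_smul, mul_pow, ← Complex.exp_nat_mul]
    rw [show ((n - m : ℤ) : ℂ) * θ * Complex.I = n * (θ * Complex.I) + m * (-θ * Complex.I) by
      push_cast; ring, Complex.exp_add]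
    ring
  have hk : (n - m : ℤ) = 0 ↔ n = m := by omega
  rw [hpolar, integral_Ioo_exp_int_mul_mul_I, if_congr hk rfl rfl]
  split_ifs with hnm
  · rw [hnm, ← two_mul, mul_comm]
  · rw [mul_zero]

theorem integral_Ioi_pow_mul_comp_sq {E : Type*} [NormedAddCommGroup E] [NormedSpace ℝ E]
    (f : ℝ → E) (n : ℕ) :
    ∫ r in Ioi (0 : ℝ), r ^ (2 * n + 1) • f (r ^ 2) =
      (1 / 2 : ℝ) • ∫ t in Ioi (0 : ℝ), t ^ n • f t := by
  rw [← integral_comp_rpow_Ioi_of_pos (g := fun t => t ^ n • f t) two_pos, ← integral_smul]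
  refine setIntegral_congr_fun measurableSet_Ioi fun r _ => ?_
  norm_num [smul_smul]
  ring_nf

section
variable {x : ℕ → ℝ}

lemma gfact_zero (x : ℕ → ℝ) : gfact x 0 = 1 := Finset.prod_range_zero _

lemma gfact_pos (hpos : ∀ n, 1 ≤ n → 0 < x n) (n : ℕ) : 0 < gfact x n :=
  Finset.prod_pos fun k _ => hpos (k + 1) k.succ_pos

lemma gexp_nonneg (hpos : ∀ n, 1 ≤ n → 0 < x n) {t : ℝ} (ht : 0 ≤ t) : 0 ≤ gexp x t :=
  tsum_nonneg fun n => div_nonneg (pow_nonneg ht n) (gfact_pos hpos n).le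

lemma momI_nonneg (hpos : ∀ n, 1 ≤ n → 0 < x n) (n : ℕ) : 0 ≤ momI x n :=
  setIntegral_nonneg measurableSet_Ioi fun _ ht =>
    div_nonneg (pow_nonneg (le_of_lt ht) n) (gexp_nonneg hpos (le_of_lt ht))

lemma mu_zero (x : ℕ → ℝ) : mu x 0 = momI x 0 := by
  rw [mu, gfact_zero, div_one]

lemma tfact_eq_momI_div {n : ℕ} (h : gfact x n ≠ 0) : tfact x n = momI x n / momI x 0 := by
  rw [tfact, mu, mu_zero]
  field_simp

lemma tfact_nonneg (hpos : ∀ n, 1 ≤ n → 0 < x n) (n : ℕ) : 0 ≤ tfact x n := by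
  rw [tfact_eq_momI_div (gfact_pos hpos n).ne']
  exact div_nonneg (momI_nonneg hpos n) (momI_nonneg hpos 0)

lemma momI_succ_div_mul_tfact (hpos : ∀ n, 1 ≤ n → 0 < x n) (n : ℕ) :
    momI x (n + 1) / (mu x 0 * tfact x n) = tfact x (n + 1) / tfact x n := by
  rw [tfact_eq_momI_div (gfact_pos hpos n).ne', tfact_eq_momI_div (gfact_pos hpos (n + 1)).ne',
    mu_zero]
  rcases eq_or_ne (momI x 0) 0 with h0 | h0
  · simp [h0] -- both sides are `0` by the convention `a / 0 = 0`
  · field_simp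

lemma integral_Ioi_pow_mul_div_gexp_sq (n : ℕ) :
    ∫ r in Ioi (0 : ℝ), r ^ (2 * n + 1) * (r ^ 2 / gexp x (r ^ 2)) = momI x (n + 1) / 2 := by
  have h := integral_Ioi_pow_mul_comp_sq (fun t => t / gexp x t) n
  simp only [smul_eq_mul] at h
  rw [h, momI, one_div_mul_eq_div]
  congr 1
  refine setIntegral_congr_fun measurableSet_Ioi fun t _ => ?_
  ring

end

theorem stmt_6_general (x : ℕ → ℝ) (hpos : ∀ n, 1 ≤ n → 0 < x n) :
    ∀ n m : ℕ,
      (1 / ((mu x 0 * Real.pi * Real.sqrt (tfact x n * tfact x m) : ℝ) : ℂ)) *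
          ∫ z : ℂ, (‖z‖ ^ 2 : ℂ) * z ^ n * (starRingEnd ℂ) z ^ m / (gexp x (‖z‖ ^ 2) : ℂ) =
        if n = m then ((tfact x (n + 1) / tfact x n : ℝ) : ℂ) else 0 := by
  intro n m
  have hintegrand : ∀ z : ℂ,
      (‖z‖ ^ 2 : ℂ) * z ^ n * (starRingEnd ℂ) z ^ m / (gexp x (‖z‖ ^ 2) : ℂ) =
        ((‖z‖ ^ 2 / gexp x (‖z‖ ^ 2) : ℝ) : ℂ) * z ^ n * (starRingEnd ℂ) z ^ m := fun z => by
    push_cast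
    ring
  simp_rw [hintegrand]
  rw [integral_mul_pow_mul_conj_pow (fun r => ((r ^ 2 / gexp x (r ^ 2) : ℝ) : ℂ))]
  split_ifs with hnm
  · subst hnm
    have hradial : ∫ r in Ioi (0 : ℝ), (r : ℂ) ^ (2 * n + 1) * ((r ^ 2 / gexp x (r ^ 2) : ℝ) : ℂ) =
        ((momI x (n + 1) / 2 : ℝ) : ℂ) := by
      rw [← integral_Ioi_pow_mul_div_gexp_sq, ← integral_complex_ofReal]
      norm_cast
    rw [hradial, Real.sqrt_mul_self (tfact_nonneg hpos n), ← momI_succ_div_mul_tfact hpos]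
    push_cast
    field_simp
  · rw [mul_zero]

/-- the quantization of the classical harmonic-oscillator
Hamiltonian `f(z) = |z|²` is the diagonal operator `x̃_{N+1}`: for all `n m`,
`(1/(μ₀ π √(x̃ₙ! x̃ₘ!))) ∫_ℂ |z|² zⁿ (conj z)ᵐ / N(|z|²) dA(z) = x̃_{n+1} δ_{n,m}`,
where `x̃_{n+1} = x̃_{n+1}!/x̃ₙ!`; in particular the quantized `|z|²` is diagonal
in the basis `(eₙ)` with spectrum the shifted renormalized sequence. -/
theorem stmt_6 (x : ℕ → ℝ) (hx0 : x 0 = 0) (hpos : ∀ n, 1 ≤ n → 0 < x n)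
    (hlim : Filter.Tendsto x Filter.atTop Filter.atTop)
    (hint : ∀ n : ℕ, IntegrableOn (fun t => t ^ n / gexp x t) (Set.Ioi 0)) :
    ∀ n m : ℕ,
      (1 / ((mu x 0 * Real.pi * Real.sqrt (tfact x n * tfact x m) : ℝ) : ℂ)) *
          ∫ z : ℂ, (‖z‖ ^ 2 : ℂ) * z ^ n * (starRingEnd ℂ) z ^ m / (gexp x (‖z‖ ^ 2) : ℂ) =
        if n = m then ((tfact x (n + 1) / tfact x n : ℝ) : ℂ) else 0 :=
  stmt_6_general x hpos
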